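/- arXiv:0803.2139 — 2 statements merged into one kernel-verified Lean document; each statement's English description precedes it below -/
import Mathlib

section
/- Let V : [0,1] → ℝ be continuous with finitely many zeros, possibly including the endpoints 0 and 1. Define ind_ν(V) as the sum of local indices at interior zeros plus, for each endpoint zero, the half-integer boundary index (±1/2 according to whether V points into or out of the interval near that endpoint). Let ind(∂_0 V) be the number of endpoints that are zeros of V, and ind(∂_− V) the number of endpoints at which V is nonzero and points inward. Then ind_ν(V) + (1/2)·ind(∂_0 V) + ind(∂_− V) = 1. -/
lemma telescope_fin (k : ℕ) (s : Fin (k + 1) → ℝ) :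
    ∑ j : Fin k, (s j.succ - s j.castSucc) = s (Fin.last k) - s 0 := by
  induction k with
  | zero => simp
  | succ n ih =>
    rw [Fin.sum_univ_castSucc]
    have h := ih (fun i => s i.castSucc)
    have e : ∀ j : Fin n, (j.succ.castSucc : Fin (n+2)) = j.castSucc.succ := by
      intro j; ext; simp
    simp only [e, Fin.castSucc_zero] at h
    rw [h, Fin.succ_last]
    ring

/-- Theorem 1 of the paper for `X = [0,1]`: `ind_ν(V) + (1/2)·ind(∂₀V) + ind(∂₋V) = 1`.
Here the interior zeros are `z₁ < ⋯ < z_k ∈ (0,1)`, `s j ∈ {±1}` is the constant sign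
of `V` on the `j`-th complementary interval, the interior local index at the `j`-th zero
is `(s (j+1) − s j)/2`, the endpoint index at an endpoint zero is `s 0 / 2` at `0` and
`−s k / 2` at `1`, `c₀ + c₁` counts the endpoint zeros, and `m₀ + m₁` counts the
endpoints at which `V` is nonzero and points inward. -/
theorem theorem1_unit_interval (V : ℝ → ℝ) (hV : ContinuousOn V (Set.Icc 0 1))
    (k : ℕ) (z : Fin k → ℝ) (hz : StrictMono z) (hmem : ∀ j, z j ∈ Set.Ioo (0:ℝ) 1)
    (hzero : ∀ x ∈ Set.Ioo (0:ℝ) 1, (V x = 0 ↔ ∃ j, z j = x))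
    (s : Fin (k + 1) → ℝ) (hs : ∀ j, s j = 1 ∨ s j = -1)
    (hsign : ∀ (j : Fin (k + 1)) (x : ℝ), x ∈ Set.Ioo (0:ℝ) 1 →
      (∀ i : Fin k, ((i : ℕ) < (j : ℕ) → z i < x) ∧ ((j : ℕ) ≤ (i : ℕ) → x < z i)) →
      0 < s j * V x)
    (I0 I1 : ℝ)
    (hI0 : (V 0 = 0 → I0 = s 0 / 2) ∧ (V 0 ≠ 0 → I0 = 0))
    (hI1 : (V 1 = 0 → I1 = -(s (Fin.last k)) / 2) ∧ (V 1 ≠ 0 → I1 = 0))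
    (c0 c1 m0 m1 : ℝ)
    (hc0 : (V 0 = 0 → c0 = 1) ∧ (V 0 ≠ 0 → c0 = 0))
    (hc1 : (V 1 = 0 → c1 = 1) ∧ (V 1 ≠ 0 → c1 = 0))
    (hm0 : (0 < V 0 → m0 = 1) ∧ (¬ 0 < V 0 → m0 = 0))
    (hm1 : (V 1 < 0 → m1 = 1) ∧ (¬ V 1 < 0 → m1 = 0)) :
    ((∑ j : Fin k, (s j.succ - s j.castSucc) / 2) + I0 + I1)
      + (1 / 2) * (c0 + c1) + (m0 + m1) = 1 := by
  classical
  have tele : ∑ j : Fin k, (s j.succ - s j.castSucc) / 2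
      = (s (Fin.last k) - s 0) / 2 := by
    rw [← Finset.sum_div, telescope_fin]
  haveI hne : (nhdsWithin (0:ℝ) (Set.Ioo (0:ℝ) 1)).NeBot := by
    refine mem_closure_iff_nhdsWithin_neBot.mp ?_
    rw [closure_Ioo one_ne_zero.symm]
    exact ⟨le_refl 0, zero_le_one⟩
  haveI hne1 : (nhdsWithin (1:ℝ) (Set.Ioo (0:ℝ) 1)).NeBot := by
    refine mem_closure_iff_nhdsWithin_neBot.mp ?_
    rw [closure_Ioo one_ne_zero.symm]
    exact ⟨zero_le_one, le_refl 1⟩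
  -- sign of V near 0
  have hVpos0 : V 0 ≠ 0 → 0 < s 0 * V 0 := by
    intro hne0
    have hev : ∀ᶠ x in nhdsWithin (0:ℝ) (Set.Ioo (0:ℝ) 1), 0 ≤ s 0 * V x := by
      have h2 : ∀ᶠ x in nhds (0:ℝ), ∀ i : Fin k, x < z i :=
        Filter.eventually_all.2 fun i => eventually_lt_nhds (hmem i).1
      filter_upwards [nhdsWithin_le_nhds h2, self_mem_nhdsWithin] with x hx hxm
      exact le_of_lt (hsign 0 x hxm fun i => ⟨fun h => absurd h (Nat.not_lt_zero _),
        fun _ => hx i⟩)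
    have ht : Filter.Tendsto (fun x => s 0 * V x) (nhdsWithin (0:ℝ) (Set.Ioo (0:ℝ) 1))
        (nhds (s 0 * V 0)) := by
      exact Filter.Tendsto.const_mul _
        ((hV 0 ⟨le_refl 0, zero_le_one⟩).mono Set.Ioo_subset_Icc_self)
    have h0 : 0 ≤ s 0 * V 0 := ge_of_tendsto ht hev
    rcases h0.lt_or_eq with h | h
    · exact h
    · exfalso
      rcases hs 0 with h1 | h1 <;> rw [h1] at h <;> simp at h <;> exact hne0 (by linarith)
  -- sign of V near 1
  have hVpos1 : V 1 ≠ 0 → 0 < s (Fin.last k) * V 1 := by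
    intro hne1'
    have hev : ∀ᶠ x in nhdsWithin (1:ℝ) (Set.Ioo (0:ℝ) 1),
        0 ≤ s (Fin.last k) * V x := by
      have h2 : ∀ᶠ x in nhds (1:ℝ), ∀ i : Fin k, z i < x :=
        Filter.eventually_all.2 fun i => eventually_gt_nhds (hmem i).2
      filter_upwards [nhdsWithin_le_nhds h2, self_mem_nhdsWithin] with x hx hxm
      exact le_of_lt (hsign (Fin.last k) x hxm fun i => ⟨fun _ => hx i,
        fun h => absurd i.isLt (Nat.not_lt.mpr (by simpa using h))⟩)
    have ht : Filter.Tendsto (fun x => s (Fin.last k) * V x)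
        (nhdsWithin (1:ℝ) (Set.Ioo (0:ℝ) 1)) (nhds (s (Fin.last k) * V 1)) := by
      exact Filter.Tendsto.const_mul _
        ((hV 1 ⟨zero_le_one, le_refl 1⟩).mono Set.Ioo_subset_Icc_self)
    have h0 : 0 ≤ s (Fin.last k) * V 1 := ge_of_tendsto ht hev
    rcases h0.lt_or_eq with h | h
    · exact h
    · exfalso
      rcases hs (Fin.last k) with h1 | h1 <;> rw [h1] at h <;> simp at h <;>
        exact hne1' (by linarith)
  have claim0 : I0 + c0 / 2 + m0 = 1 / 2 + s 0 / 2 := by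
    by_cases h : V 0 = 0
    · have e1 := hI0.1 h
      have e2 := hc0.1 h
      have e3 := hm0.2 (by rw [h]; exact lt_irrefl 0)
      rw [e1, e2, e3]; ring
    · have e1 := hI0.2 h
      have e2 := hc0.2 h
      have hp := hVpos0 h
      rcases hs 0 with h1 | h1
      · have : 0 < V 0 := by rw [h1] at hp; linarith
        rw [e1, e2, hm0.1 this, h1]; ring
      · have : V 0 < 0 := by rw [h1] at hp; linarith
        rw [e1, e2, hm0.2 (by linarith), h1]; ring
  have claim1 : I1 + c1 / 2 + m1 = 1 / 2 - s (Fin.last k) / 2 := by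
    by_cases h : V 1 = 0
    · have e1 := hI1.1 h
      have e2 := hc1.1 h
      have e3 := hm1.2 (by rw [h]; exact lt_irrefl 0)
      rw [e1, e2, e3]; ring
    · have e1 := hI1.2 h
      have e2 := hc1.2 h
      have hp := hVpos1 h
      rcases hs (Fin.last k) with h1 | h1
      · have : 0 < V 1 := by rw [h1] at hp; linarith
        rw [e1, e2, hm1.2 (by linarith), h1]; ring
      · have : V 1 < 0 := by rw [h1] at hp; linarith
        rw [e1, e2, hm1.1 this, h1]; ring
  rw [tele]
  linarith [claim0, claim1]
end

section
/- Let V : [0,1] → ℝ be continuous with isolated zeros. Define ind_τ(V) as the sum over interior zeros of the sign-change index plus, at each endpoint zero, ±1/2 as in the paper's n = 1 convention. Let ∂_+, ∂_−, ∂_0 denote the sets of endpoints where V points outward, inward, or vanishes respectively. Then ind_τ(V) = 1 − (1/2)|∂_0| − |∂_−|. -/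
private lemma tel_sum : ∀ (k : ℕ) (s : Fin (k+1) → ℝ),
    (∑ j : Fin k, (s j.succ - s j.castSucc)) = s (Fin.last k) - s 0 := by
  intro k
  induction k with
  | zero => intro s; simp
  | succ k ih =>
    intro s
    rw [Fin.sum_univ_castSucc]
    have := ih (fun j => s j.castSucc)
    simp only [Fin.succ_castSucc] at this ⊢
    rw [show (∑ j : Fin k, (s (j.succ.castSucc) - s (j.castSucc.castSucc)))
        = s ((Fin.last k).castSucc) - s ((0 : Fin (k+1)).castSucc) from this]
    simp [Fin.succ_last]

/-- Theorem 2 of the paper in dimension `n = 1` for `X = [0,1]`: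
`ind_τ(V) = 1 − (1/2)·|∂₀X| − |∂₋X|`.  Interior zeros `z₁ < ⋯ < z_k ∈ (0,1)`,
`s j ∈ {±1}` the constant sign of `V` on the `j`-th complementary interval,
interior sign-change index `(s (j+1) − s j)/2`, endpoint index `s 0 / 2` at an
endpoint zero at `0` and `−s k / 2` at `1`; `c₀ + c₁` counts the endpoints where
`V` vanishes and `m₀ + m₁` the endpoints where `V` is nonzero and points inward
(`V(0) > 0`, resp. `V(1) < 0`). -/
theorem theorem2_unit_interval (V : ℝ → ℝ) (hV : ContinuousOn V (Set.Icc 0 1))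
    (k : ℕ) (z : Fin k → ℝ) (hz : StrictMono z) (hmem : ∀ j, z j ∈ Set.Ioo (0:ℝ) 1)
    (hzero : ∀ x ∈ Set.Ioo (0:ℝ) 1, (V x = 0 ↔ ∃ j, z j = x))
    (s : Fin (k + 1) → ℝ) (hs : ∀ j, s j = 1 ∨ s j = -1)
    (hsign : ∀ (j : Fin (k + 1)) (x : ℝ), x ∈ Set.Ioo (0:ℝ) 1 →
      (∀ i : Fin k, ((i : ℕ) < (j : ℕ) → z i < x) ∧ ((j : ℕ) ≤ (i : ℕ) → x < z i)) →
      0 < s j * V x)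
    (I0 I1 : ℝ)
    (hI0 : (V 0 = 0 → I0 = s 0 / 2) ∧ (V 0 ≠ 0 → I0 = 0))
    (hI1 : (V 1 = 0 → I1 = -(s (Fin.last k)) / 2) ∧ (V 1 ≠ 0 → I1 = 0))
    (c0 c1 m0 m1 : ℝ)
    (hc0 : (V 0 = 0 → c0 = 1) ∧ (V 0 ≠ 0 → c0 = 0))
    (hc1 : (V 1 = 0 → c1 = 1) ∧ (V 1 ≠ 0 → c1 = 0))
    (hm0 : (0 < V 0 → m0 = 1) ∧ (¬ 0 < V 0 → m0 = 0))
    (hm1 : (V 1 < 0 → m1 = 1) ∧ (¬ V 1 < 0 → m1 = 0)) :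
    (∑ j : Fin k, (s j.succ - s j.castSucc) / 2) + I0 + I1
      = 1 - (1 / 2) * (c0 + c1) - (m0 + m1) := by
  -- telescoping
  have htel : (∑ j : Fin k, (s j.succ - s j.castSucc) / 2)
      = (s (Fin.last k) - s 0) / 2 := by
    rw [← Finset.sum_div, tel_sum]
  -- a point left of all zeros
  obtain ⟨x0, hx00, hx01, hx0z⟩ : ∃ x0 : ℝ, 0 < x0 ∧ x0 < 1 ∧ ∀ i : Fin k, x0 < z i := by
    rcases Nat.eq_zero_or_pos k with hk | hk
    · exact ⟨1/2, by norm_num, by norm_num, fun i => absurd i.2 (by omega)⟩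
    · have h := hmem ⟨0, hk⟩
      refine ⟨z ⟨0, hk⟩ / 2, by linarith [h.1], by linarith [h.1, h.2], fun i => ?_⟩
      have : z ⟨0, hk⟩ ≤ z i := hz.monotone (Fin.mk_le_mk.mpr (Nat.zero_le _))
      linarith [h.1]
  -- a point right of all zeros
  obtain ⟨x1, hx10, hx11, hx1z⟩ : ∃ x1 : ℝ, 0 < x1 ∧ x1 < 1 ∧ ∀ i : Fin k, z i < x1 := by
    rcases Nat.eq_zero_or_pos k with hk | hk
    · exact ⟨1/2, by norm_num, by norm_num, fun i => absurd i.2 (by omega)⟩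
    · have h := hmem ⟨k - 1, by omega⟩
      refine ⟨(z ⟨k - 1, by omega⟩ + 1) / 2, by linarith [h.1, h.2],
        by linarith [h.2], fun i => ?_⟩
      have : z i ≤ z ⟨k - 1, by omega⟩ := hz.monotone (Fin.mk_le_mk.mpr (by omega)).ge.le
      linarith [h.2]
  have hsx0 : 0 < s 0 * V x0 :=
    hsign 0 x0 ⟨hx00, hx01⟩ (fun i => ⟨fun h => by simp at h, fun _ => hx0z i⟩)
  have hsx1 : 0 < s (Fin.last k) * V x1 :=
    hsign (Fin.last k) x1 ⟨hx10, hx11⟩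
      (fun i => ⟨fun _ => hx1z i, fun h => absurd h (by simp [Fin.is_lt i |>.not_ge])⟩)
  -- sign matching at endpoints
  have hB : V 0 ≠ 0 → 0 < s 0 * V 0 := by
    intro hv
    by_contra hcon
    push_neg at hcon
    have hne : s 0 * V 0 < 0 := by
      rcases hs 0 with h | h <;> rw [h] at hcon ⊢ <;>
        rcases lt_or_gt_of_ne hv with h' | h' <;> nlinarith
    have hcont : ContinuousOn V (Set.Icc 0 x0) :=
      hV.mono (Set.Icc_subset_Icc le_rfl hx01.le)
    have : ∃ c ∈ Set.Ioo (0:ℝ) x0, V c = 0 := by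
      rcases hs 0 with h | h <;> rw [h] at hne hsx0
      · have : (0:ℝ) ∈ Set.Ioo (V 0) (V x0) := by constructor <;> nlinarith
        obtain ⟨c, hc, hvc⟩ := intermediate_value_Ioo hx00.le hcont this
        exact ⟨c, hc, hvc⟩
      · have : (0:ℝ) ∈ Set.Ioo (V x0) (V 0) := by constructor <;> nlinarith
        obtain ⟨c, hc, hvc⟩ := intermediate_value_Ioo' hx00.le hcont this
        exact ⟨c, hc, hvc⟩
    obtain ⟨c, hc, hvc⟩ := this
    obtain ⟨j, hj⟩ := (hzero c ⟨hc.1, hc.2.trans hx01⟩).mp hvc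
    have := hx0z j
    linarith [hc.2]
  have hA : V 1 ≠ 0 → 0 < s (Fin.last k) * V 1 := by
    intro hv
    by_contra hcon
    push_neg at hcon
    have hne : s (Fin.last k) * V 1 < 0 := by
      rcases hs (Fin.last k) with h | h <;> rw [h] at hcon ⊢ <;>
        rcases lt_or_gt_of_ne hv with h' | h' <;> nlinarith
    have hcont : ContinuousOn V (Set.Icc x1 1) :=
      hV.mono (Set.Icc_subset_Icc hx10.le le_rfl)
    have : ∃ c ∈ Set.Ioo x1 (1:ℝ), V c = 0 := by
      rcases hs (Fin.last k) with h | h <;> rw [h] at hne hsx1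
      · have : (0:ℝ) ∈ Set.Ioo (V 1) (V x1) := by constructor <;> nlinarith
        obtain ⟨c, hc, hvc⟩ := intermediate_value_Ioo' hx11.le hcont this
        exact ⟨c, hc, hvc⟩
      · have : (0:ℝ) ∈ Set.Ioo (V x1) (V 1) := by constructor <;> nlinarith
        obtain ⟨c, hc, hvc⟩ := intermediate_value_Ioo hx11.le hcont this
        exact ⟨c, hc, hvc⟩
    obtain ⟨c, hc, hvc⟩ := this
    obtain ⟨j, hj⟩ := (hzero c ⟨hx10.trans hc.1, hc.2⟩).mp hvc
    have := hx1z j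
    linarith [hc.1]
  -- endpoint contributions
  have h0 : -(s 0) / 2 + I0 = 1/2 - c0/2 - m0 := by
    by_cases hv : V 0 = 0
    · have := hI0.1 hv
      have := hc0.1 hv
      have := hm0.2 (by rw [hv]; exact lt_irrefl 0)
      linarith
    · have hI := hI0.2 hv
      have hc := hc0.2 hv
      rcases hs 0 with h | h
      · have hpos : 0 < V 0 := by have := hB hv; rw [h] at this; linarith
        have := hm0.1 hpos
        rw [h]; linarith
      · have hneg : V 0 < 0 := by have := hB hv; rw [h] at this; linarith
        have := hm0.2 (by linarith)
        rw [h]; linarith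
  have h1 : s (Fin.last k) / 2 + I1 = 1/2 - c1/2 - m1 := by
    by_cases hv : V 1 = 0
    · have := hI1.1 hv
      have := hc1.1 hv
      have := hm1.2 (by rw [hv]; exact lt_irrefl 0)
      linarith
    · have hI := hI1.2 hv
      have hc := hc1.2 hv
      rcases hs (Fin.last k) with h | h
      · have hpos : 0 < V 1 := by have := hA hv; rw [h] at this; linarith
        have := hm1.2 (by linarith)
        rw [h]; linarith
      · have hneg : V 1 < 0 := by have := hA hv; rw [h] at this; linarith
        have := hm1.1 hneg
        rw [h]; linarith
  rw [htel]
  linarith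
end
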